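/- arXiv:0706.2580 — 7 statements merged into one kernel-verified Lean document; each statement's English description precedes it below -/
import Mathlib

section
/- Let A, B be real 2×2 matrices, each with no real eigenvalues and with positive lower-left entry a₂₁ > 0, b₂₁ > 0. Then the product AB has no eigenvalue in [0, ∞); equivalently, for every nonzero v ∈ ℝ², ABv is never a nonnegative real scalar multiple of v. -/
/-!
The wedge `v ∧ Av` equals the binary quadratic form
`a₂₁ x² + (a₂₂ - a₁₁) x y - a₁₂ y²` in `v = (x, y)`, whose discriminant is `(tr A)² - 4 det A`.
So a matrix with no real eigenvalues and `a₂₁ > 0` turns every nonzero vector strictly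
counterclockwise. If `ABv = μ v` with `μ ≥ 0`, then with `w = Bv` both `v ∧ w > 0` and
`w ∧ Aw = w ∧ μ v = -μ (v ∧ w) > 0`, which is impossible.
-/

namespace Matrix

section CommRing

variable {R : Type*} [CommRing R]

def wedge (v w : Fin 2 → R) : R := v 0 * w 1 - v 1 * w 0

lemma wedge_smul_left_eq_neg (v w : Fin 2 → R) (μ : R) : wedge w (μ • v) = -(μ * wedge v w) := by
  simp only [wedge, Pi.smul_apply, smul_eq_mul]
  ring

lemma wedge_mulVec_eq (A : Matrix (Fin 2) (Fin 2) R) (v : Fin 2 → R) :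
    wedge v (A *ᵥ v) = A 1 0 * v 0 ^ 2 + (A 1 1 - A 0 0) * v 0 * v 1 - A 0 1 * v 1 ^ 2 := by
  simp only [wedge, mulVec, dotProduct, Fin.sum_univ_two]
  ring

end CommRing

variable {R : Type*} [Field R] [LinearOrder R] [IsStrictOrderedRing R]

lemma wedge_mulVec_pos (A : Matrix (Fin 2) (Fin 2) R)
    (hA : A.trace ^ 2 < 4 * A.det) (hA10 : 0 < A 1 0) {v : Fin 2 → R} (hv : v ≠ 0) :
    0 < wedge v (A *ᵥ v) := by
  rw [trace_fin_two, det_fin_two] at hA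
  rw [wedge_mulVec_eq]
  rcases eq_or_ne (v 1) 0 with hv1 | hv1
  · have hv0 : v 0 ≠ 0 := fun hv0 => hv (funext <| Fin.forall_fin_two.2 ⟨hv0, hv1⟩)
    rw [hv1]
    nlinarith [mul_pos hA10 (sq_pos_of_ne_zero hv0)]
  · -- complete the square in `v 0`: `4 a₂₁ q(v) = (2 a₂₁ x + (a₂₂ - a₁₁) y)² + (4 det A - (tr A)²) y²`
    nlinarith [sq_nonneg (2 * A 1 0 * v 0 + (A 1 1 - A 0 0) * v 1),
      mul_pos (sub_pos.2 hA) (sq_pos_of_ne_zero hv1)]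

end Matrix

/-- If `A` and `B` each have no real eigenvalues and positive lower-left entries, then
`AB` has no eigenvalue in `[0, ∞)`: for every nonzero `v`, `ABv` is never a nonnegative
real multiple of `v`. -/
theorem stmt5 (A B : Matrix (Fin 2) (Fin 2) ℝ)
    (hA : A.trace ^ 2 < 4 * A.det) (hB : B.trace ^ 2 < 4 * B.det)
    (hA21 : 0 < A 1 0) (hB21 : 0 < B 1 0) :
    ∀ v : Fin 2 → ℝ, v ≠ 0 → ∀ μ : ℝ, 0 ≤ μ → (A * B).mulVec v ≠ μ • v := by
  intro v hv μ hμ hABv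
  set w := B.mulVec v
  have hvw : 0 < Matrix.wedge v w := Matrix.wedge_mulVec_pos B hB hB21 hv
  have hw : w ≠ 0 := by
    rintro hw
    simp [hw, Matrix.wedge] at hvw
  have hwAw : 0 < Matrix.wedge w (A.mulVec w) := Matrix.wedge_mulVec_pos A hA hA21 hw
  rw [Matrix.mulVec_mulVec, hABv, Matrix.wedge_smul_left_eq_neg] at hwAw
  linarith [mul_nonneg hμ hvw.le]
end

section
/- Let H : ℝ² → ℝ be a differentiable function such that ∂H/∂x is never zero. Then ∂H/∂x is either strictly positive on all of ℝ² or strictly negative on all of ℝ². -/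
/-! Along each horizontal line `x ↦ H (x, y)` the partial derivative never vanishes, so by
Darboux's theorem it has constant sign and the line is strictly monotone; that sign is the sign of
`ψ y = H (1, y) - H (0, y)`. Hence `ψ` is continuous and never zero, so by the intermediate value
theorem it has constant sign on `ℝ`, and so does `∂H/∂x`. -/

theorem DifferentiableAt.hasDerivAt_comp_prodMk_const {𝕜 F G : Type*} [NontriviallyNormedField 𝕜]
    [NormedAddCommGroup F] [NormedSpace 𝕜 F] [NormedAddCommGroup G] [NormedSpace 𝕜 G]
    {H : 𝕜 × F → G} {x : 𝕜} {y : F} (hH : DifferentiableAt 𝕜 H (x, y)) :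
    HasDerivAt (fun t => H (t, y)) (fderiv 𝕜 H (x, y) (1, 0)) x :=
  hH.hasFDerivAt.comp_hasDerivAt x ((hasDerivAt_id x).prodMk (hasDerivAt_const x y))

theorem forall_pos_or_forall_neg_of_continuous_of_ne_zero {X : Type*} [TopologicalSpace X]
    [PreconnectedSpace X] {ψ : X → ℝ} (hψ : Continuous ψ) (hne : ∀ y, ψ y ≠ 0) :
    (∀ y, 0 < ψ y) ∨ ∀ y, ψ y < 0 := by
  by_contra! ⟨⟨a, ha⟩, ⟨b, hb⟩⟩
  obtain ⟨y, hy⟩ := intermediate_value_univ₂ hψ continuous_const ha hb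
  exact hne y hy

section DerivSign

variable {f f' : ℝ → ℝ}

theorem deriv_pos_iff_lt_of_forall_ne_zero (hf : ∀ x, HasDerivAt f (f' x) x)
    (hf' : ∀ x, f' x ≠ 0) (x : ℝ) {a b : ℝ} (hab : a < b) :
    0 < f' x ↔ f a < f b := by
  rcases hasDerivWithinAt_forall_lt_or_forall_gt_of_forall_ne convex_univ
    (fun x _ => (hf x).hasDerivWithinAt) (fun x _ => hf' x) with hneg | hpos
  · have hneg : ∀ x, f' x < 0 := fun x => hneg x trivial
    exact iff_of_false (hneg x).not_gt (strictAnti_of_hasDerivAt_neg hf hneg hab).asymm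
  · have hpos : ∀ x, 0 < f' x := fun x => hpos x trivial
    exact iff_of_true (hpos x) (strictMono_of_hasDerivAt_pos hf hpos hab)

theorem deriv_neg_iff_lt_of_forall_ne_zero (hf : ∀ x, HasDerivAt f (f' x) x)
    (hf' : ∀ x, f' x ≠ 0) (x : ℝ) {a b : ℝ} (hab : a < b) :
    f' x < 0 ↔ f b < f a := by
  simpa only [neg_pos, Pi.neg_apply, neg_lt_neg_iff] using
    deriv_pos_iff_lt_of_forall_ne_zero (fun x => (hf x).neg) (fun x => neg_ne_zero.2 (hf' x)) x hab

end DerivSign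

/-- If `H : ℝ² → ℝ` is differentiable and `∂H/∂x` never vanishes, then `∂H/∂x` has
constant sign on all of `ℝ²`. -/
theorem stmt6 (H : ℝ × ℝ → ℝ) (hH : Differentiable ℝ H)
    (h : ∀ p : ℝ × ℝ, fderiv ℝ H p (1, 0) ≠ 0) :
    (∀ p : ℝ × ℝ, 0 < fderiv ℝ H p (1, 0)) ∨
    (∀ p : ℝ × ℝ, fderiv ℝ H p (1, 0) < 0) := by
  have hline (y : ℝ) : ∀ x, HasDerivAt (fun t => H (t, y)) (fderiv ℝ H (x, y) (1, 0)) x :=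
    fun x => (hH (x, y)).hasDerivAt_comp_prodMk_const
  have hline_ne (y : ℝ) : ∀ x, fderiv ℝ H (x, y) (1, 0) ≠ 0 := fun x => h (x, y)
  have hψ_cont : Continuous fun y => H (1, y) - H (0, y) := by
    have := hH.continuous
    fun_prop
  have hψ_ne (y : ℝ) : H (1, y) - H (0, y) ≠ 0 := by
    rcases (h (0, y)).lt_or_gt with hneg | hpos
    · exact (sub_neg.2 ((deriv_neg_iff_lt_of_forall_ne_zero (hline y) (hline_ne y) 0
        zero_lt_one).1 hneg)).ne
    · exact (sub_pos.2 ((deriv_pos_iff_lt_of_forall_ne_zero (hline y) (hline_ne y) 0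
        zero_lt_one).1 hpos)).ne'
  rcases forall_pos_or_forall_neg_of_continuous_of_ne_zero hψ_cont hψ_ne with hpos | hneg
  · exact .inl fun ⟨x, y⟩ => (deriv_pos_iff_lt_of_forall_ne_zero (hline y) (hline_ne y) x
      zero_lt_one).2 (sub_pos.1 (hpos y))
  · exact .inr fun ⟨x, y⟩ => (deriv_neg_iff_lt_of_forall_ne_zero (hline y) (hline_ne y) x
      zero_lt_one).2 (sub_neg.1 (hneg y))
end

section
/- Let F : ℝ² → ℝ² be a differentiable (not necessarily C¹) map such that for every p ∈ ℝ², the derivative DF_p has no real eigenvalues. Then F² = F ∘ F has at most one fixed point. -/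
/-!
Write `v × w := v.1 * w.2 - v.2 * w.1`. If `a ≠ b` and both displacements `F a - a`, `F b - b`
are parallel to `v = b - a`, then `x ↦ v × (F x - x)` vanishes at `a` and at `b`, so by the mean
value theorem its derivative in the direction `v` vanishes somewhere on the segment, i.e.
`v × DF_c v = 0`: `v` is a real eigenvector of `DF_c`. This applies to `a = r`, `b = F r` for a
point of period two (then `F b - b = a - b`), so every such point is fixed, and to any two fixed
points.
-/

def planeCross (v : ℝ × ℝ) : ℝ × ℝ →L[ℝ] ℝ :=
  v.1 • ContinuousLinearMap.snd ℝ ℝ ℝ - v.2 • ContinuousLinearMap.fst ℝ ℝ ℝ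

@[simp]
lemma planeCross_apply (v w : ℝ × ℝ) : planeCross v w = v.1 * w.2 - v.2 * w.1 := rfl

lemma planeCross_smul_self (v : ℝ × ℝ) (c : ℝ) : planeCross v (c • v) = 0 := by
  simp only [planeCross_apply, Prod.smul_fst, Prod.smul_snd, smul_eq_mul]
  ring

lemma exists_eq_smul_of_planeCross_eq_zero {v w : ℝ × ℝ} (hv : v ≠ 0)
    (h : planeCross v w = 0) :
    ∃ μ : ℝ, w = μ • v := by
  rw [planeCross_apply] at h
  rcases v with ⟨v₁, v₂⟩
  rcases eq_or_ne v₁ 0 with rfl | h₁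
  · have h₂ : v₂ ≠ 0 := fun h₂ => hv (by rw [h₂]; rfl)
    refine ⟨w.2 / v₂, Prod.ext ?_ ?_⟩
    · simpa [h₂] using h
    · simp [h₂]
  · refine ⟨w.1 / v₁, Prod.ext ?_ ?_⟩
    · simp [h₁]
    · simp only [Prod.smul_snd, smul_eq_mul]
      field_simp
      linarith

lemma exists_planeCross_fderiv_eq_zero {F : ℝ × ℝ → ℝ × ℝ} (hF : Differentiable ℝ F)
    {a b : ℝ × ℝ} (ha : planeCross (b - a) (F a - a) = 0)
    (hb : planeCross (b - a) (F b - b) = 0) :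
    ∃ c, planeCross (b - a) (fderiv ℝ F c (b - a)) = 0 := by
  set v := b - a
  have hderiv : ∀ x ∈ (Set.univ : Set (ℝ × ℝ)),
      HasFDerivWithinAt (fun x => planeCross v (F x - x))
        ((planeCross v).comp (fderiv ℝ F x - ContinuousLinearMap.id ℝ _)) Set.univ x :=
    fun x _ => ((planeCross v).hasFDerivAt.comp x
      ((hF x).hasFDerivAt.sub (hasFDerivAt_id x))).hasFDerivWithinAt
  obtain ⟨c, -, hc⟩ := domain_mvt hderiv convex_univ (Set.mem_univ a) (Set.mem_univ b)
  have hvv : planeCross v v = 0 := by simpa using planeCross_smul_self v 1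
  simp only [ContinuousLinearMap.comp_apply, sub_apply, ContinuousLinearMap.id_apply] at hc
  rw [ha, hb, map_sub (planeCross v), hvv] at hc
  exact ⟨c, by linarith⟩

lemma eq_of_planeCross_sub_self_eq_zero {F : ℝ × ℝ → ℝ × ℝ} (hF : Differentiable ℝ F)
    (h : ∀ p : ℝ × ℝ, ∀ μ : ℝ, ∀ v : ℝ × ℝ, v ≠ 0 → fderiv ℝ F p v ≠ μ • v) {a b : ℝ × ℝ}
    (ha : planeCross (b - a) (F a - a) = 0) (hb : planeCross (b - a) (F b - b) = 0) :
    a = b := by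
  by_contra hab
  have hv : b - a ≠ 0 := sub_ne_zero.2 (Ne.symm hab)
  obtain ⟨c, hc⟩ := exists_planeCross_fderiv_eq_zero hF ha hb
  obtain ⟨μ, hμ⟩ := exists_eq_smul_of_planeCross_eq_zero hv hc
  exact h c μ (b - a) hv hμ

/-- If `F : ℝ² → ℝ²` is differentiable and no derivative `DF_p` has a real eigenvalue,
then `F ∘ F` has at most one fixed point. -/
theorem stmt9 (F : ℝ × ℝ → ℝ × ℝ) (hF : Differentiable ℝ F)
    (h : ∀ p : ℝ × ℝ, ∀ μ : ℝ, ∀ v : ℝ × ℝ, v ≠ 0 → fderiv ℝ F p v ≠ μ • v) :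
    ∀ p q : ℝ × ℝ, F (F p) = p → F (F q) = q → p = q := by
  have fixed_of_periodic : ∀ r, F (F r) = r → F r = r := fun r hr =>
    (eq_of_planeCross_sub_self_eq_zero hF h (a := r) (b := F r)
      (by simpa using planeCross_smul_self (F r - r) 1)
      (by rw [hr, ← neg_sub (F r) r, ← neg_one_smul ℝ (F r - r)]
          exact planeCross_smul_self _ _)).symm
  intro p q hp hq
  exact eq_of_planeCross_sub_self_eq_zero hF h
    (by rw [fixed_of_periodic p hp, sub_self, map_zero])
    (by rw [fixed_of_periodic q hq, sub_self, map_zero])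
end

section
/- If F : ℝ² → ℝ² is a differentiable map with DF_p having no real eigenvalues for all p, then Spec(F²) ∩ [0, ∞) = ∅, i.e. for every p the derivative D(F²)_p = DF_{F(p)} · DF_p has no nonnegative real eigenvalue. -/
/-!
If `DF_q` has no real eigenvector, then `cross v (DF_q v) ≠ 0` for every `v ≠ 0`. This sign does
not depend on `v`, since `ℝ² ∖ {0}` is connected, nor on `q`: along a line `q + s • u` it is the
derivative of `s ↦ cross u (F (q + s • u))`, whose sign is constant by Darboux's theorem.
If `DF_{F p} (DF_p v) = μ • v`, then with `w = DF_p v` we get `cross w (DF_{F p} w) = -μ * cross v w`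
while `cross v (DF_p v) = cross v w ≠ 0`; equal signs force `μ < 0`.
-/

def cross (v w : ℝ × ℝ) : ℝ := v.1 * w.2 - v.2 * w.1

lemma cross_smul_right (v w : ℝ × ℝ) (μ : ℝ) : cross w (μ • v) = -(μ * cross v w) := by
  simp only [cross, Prod.smul_fst, Prod.smul_snd, smul_eq_mul]; ring

lemma cross_zero_right (v : ℝ × ℝ) : cross v 0 = 0 := by simp [cross]

lemma exists_eq_smul_of_cross_eq_zero {v w : ℝ × ℝ} (hv : v ≠ 0) (h : cross v w = 0) :
    ∃ μ : ℝ, w = μ • v := by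
  unfold cross at h
  by_cases h1 : v.1 = 0
  · have h2 : v.2 ≠ 0 := fun h2 => hv (Prod.ext h1 h2)
    refine ⟨w.2 / v.2, Prod.ext ?_ ?_⟩
    · simpa [h1, h2] using h
    · simp [h2]
  · refine ⟨w.1 / v.1, Prod.ext ?_ ?_⟩
    · simp [h1]
    · simp only [Prod.smul_snd, smul_eq_mul]
      field_simp
      linarith

lemma HasDerivAt.cross_const_left {g : ℝ → ℝ × ℝ} {g' : ℝ × ℝ} {s : ℝ} (u : ℝ × ℝ)
    (hg : HasDerivAt g g' s) : HasDerivAt (fun s => cross u (g s)) (cross u g') s :=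
  (((ContinuousLinearMap.snd ℝ ℝ ℝ).hasFDerivAt.comp_hasDerivAt s hg).const_mul u.1).sub
    (((ContinuousLinearMap.fst ℝ ℝ ℝ).hasFDerivAt.comp_hasDerivAt s hg).const_mul u.2)

lemma mul_pos_of_mul_pos_of_mul_pos {a b c : ℝ} (hab : 0 < a * b) (hbc : 0 < b * c) :
    0 < a * c := by
  have : 0 < a * c * (b * b) := by nlinarith
  exact pos_of_mul_pos_left this (mul_self_nonneg b)

lemma IsPreconnected.mul_pos_of_forall_ne_zero {X : Type*} [TopologicalSpace X] {S : Set X}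
    (hS : IsPreconnected S) {f : X → ℝ} (hf : ContinuousOn f S) (h0 : ∀ x ∈ S, f x ≠ 0)
    {a b : X} (ha : a ∈ S) (hb : b ∈ S) : 0 < f a * f b := by
  have no_change {x y : X} (hx : x ∈ S) (hy : y ∈ S) (hxy : f x ≤ 0 ∧ 0 ≤ f y) : False := by
    obtain ⟨c, hc, hc0⟩ := hS.intermediate_value hx hy hf hxy
    exact h0 c hc hc0
  rcases (h0 a ha).lt_or_gt with hfa | hfa <;> rcases (h0 b hb).lt_or_gt with hfb | hfb
  · exact mul_pos_of_neg_of_neg hfa hfb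
  · exact (no_change ha hb ⟨hfa.le, hfb.le⟩).elim
  · exact (no_change hb ha ⟨hfb.le, hfa.le⟩).elim
  · exact mul_pos hfa hfb

lemma mul_pos_of_hasDerivAt_of_forall_ne_zero {f f' : ℝ → ℝ}
    (hf : ∀ x, HasDerivAt f (f' x) x) (h0 : ∀ x, f' x ≠ 0) (a b : ℝ) : 0 < f' a * f' b := by
  rcases hasDerivWithinAt_forall_lt_or_forall_gt_of_forall_ne convex_univ
      (fun x _ => (hf x).hasDerivWithinAt) (fun x _ => h0 x) with hneg | hpos
  · exact mul_pos_of_neg_of_neg (hneg a trivial) (hneg b trivial)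
  · exact mul_pos (hpos a trivial) (hpos b trivial)

lemma cross_apply_ne_zero {A : ℝ × ℝ → ℝ × ℝ} (hA : ∀ μ : ℝ, ∀ v, v ≠ 0 → A v ≠ μ • v)
    {v : ℝ × ℝ} (hv : v ≠ 0) : cross v (A v) ≠ 0 := fun h0 =>
  let ⟨μ, hμ⟩ := exists_eq_smul_of_cross_eq_zero hv h0
  hA μ v hv hμ

lemma isConnected_compl_zero_prod : IsConnected ({0}ᶜ : Set (ℝ × ℝ)) := by
  apply isConnected_compl_singleton_of_one_lt_rank
  rw [rank_prod', Module.rank_self]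
  norm_num

lemma mul_pos_cross_apply {A : ℝ × ℝ →L[ℝ] ℝ × ℝ} (hA : ∀ μ : ℝ, ∀ v, v ≠ 0 → A v ≠ μ • v)
    {v w : ℝ × ℝ} (hv : v ≠ 0) (hw : w ≠ 0) : 0 < cross v (A v) * cross w (A w) := by
  refine isConnected_compl_zero_prod.isPreconnected.mul_pos_of_forall_ne_zero ?_
    (fun u hu => cross_apply_ne_zero hA hu) hv hw
  unfold cross
  fun_prop

section
variable {F : ℝ × ℝ → ℝ × ℝ} (hF : Differentiable ℝ F)
  (h : ∀ p : ℝ × ℝ, ∀ μ : ℝ, ∀ v : ℝ × ℝ, v ≠ 0 → fderiv ℝ F p v ≠ μ • v)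
include hF h

lemma mul_pos_cross_fderiv_of_mem_line (q : ℝ × ℝ) {u : ℝ × ℝ} (hu : u ≠ 0) (t : ℝ) :
    0 < cross u (fderiv ℝ F q u) * cross u (fderiv ℝ F (q + t • u) u) := by
  have hline (s : ℝ) : HasDerivAt (fun s : ℝ => q + s • u) u s := by
    simpa using ((hasDerivAt_id s).smul_const u).const_add q
  have hderiv (s : ℝ) : HasDerivAt (fun s => cross u (F (q + s • u)))
      (cross u (fderiv ℝ F (q + s • u) u)) s :=
    ((hF _).hasFDerivAt.comp_hasDerivAt s (hline s)).cross_const_left u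
  simpa using mul_pos_of_hasDerivAt_of_forall_ne_zero hderiv
    (fun s => cross_apply_ne_zero (h _) hu) 0 t

lemma mul_pos_cross_fderiv (q q' : ℝ × ℝ) {v w : ℝ × ℝ} (hv : v ≠ 0) (hw : w ≠ 0) :
    0 < cross v (fderiv ℝ F q v) * cross w (fderiv ℝ F q' w) := by
  obtain rfl | hqq := eq_or_ne q' q
  · exact mul_pos_cross_apply (h q') hv hw
  have hu : q' - q ≠ 0 := sub_ne_zero.mpr hqq
  have along_line := mul_pos_of_mul_pos_of_mul_pos (mul_pos_cross_apply (h q) hv hu)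
    (mul_pos_cross_fderiv_of_mem_line hF h q hu 1)
  rw [one_smul, add_sub_cancel] at along_line
  exact mul_pos_of_mul_pos_of_mul_pos along_line (mul_pos_cross_apply (h q') hu hw)

end

/-- If `F : ℝ² → ℝ²` is differentiable and no `DF_p` has a real eigenvalue, then
`Spec(F²) ∩ [0, ∞) = ∅`: no derivative `D(F∘F)_p` has a nonnegative real eigenvalue. -/
theorem stmt10 (F : ℝ × ℝ → ℝ × ℝ) (hF : Differentiable ℝ F)
    (h : ∀ p : ℝ × ℝ, ∀ μ : ℝ, ∀ v : ℝ × ℝ, v ≠ 0 → fderiv ℝ F p v ≠ μ • v) :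
    ∀ p : ℝ × ℝ, ∀ μ : ℝ, 0 ≤ μ → ∀ v : ℝ × ℝ, v ≠ 0 →
      fderiv ℝ (F ∘ F) p v ≠ μ • v := by
  intro p μ hμ v hv hEq
  set w := fderiv ℝ F p v
  have hvw : cross v w ≠ 0 := cross_apply_ne_zero (h p) hv
  have hw : w ≠ 0 := fun hw => hvw (by rw [hw, cross_zero_right])
  have hFw : fderiv ℝ F (F p) w = μ • v := by
    rwa [fderiv_comp p (hF (F p)) (hF p)] at hEq
  have hpos := mul_pos_cross_fderiv hF h p (F p) hv hw
  rw [hFw, cross_smul_right] at hpos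
  nlinarith [mul_self_nonneg (cross v w)]
end

section
/- The map F(x,y) = ((αx − βy)(1 + x² + y²), (βx + αy)(1 + x² + y²)) with α² < 3β² has the property that DF_p has no real eigenvalues for any p ∈ ℝ²; consequently F ∘ F has at most one fixed point. -/
/-!
In complex notation `F z = c (1 + |z|²) z` with `c = α + iβ`. Writing `s = |z|²`, the Jacobian
of `F` has discriminant `4 ((α² - 3β²) s² - 4β² s - β²)`, negative when `α² < 3β²`. For the second
claim, `|F z|² = g(|z|²)` with `g(s) = |c|² s (1 + s)²` strictly increasing on `[0, ∞)`, and a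
period-two point of a strictly increasing map is fixed, so a fixed point `z` of `F ∘ F` satisfies
`|F z| = |z|`. Then `F (F z) = c² (1 + |z|²)² z` and, unless `z = 0`, `|c|² (1 + |z|²)² = 1`, so
`z = F (F z)` forces `c² = |c|²`, i.e. `β = 0`.
-/

open ContinuousLinearMap

lemma StrictMonoOn.apply_eq_self_of_apply_apply_eq {α : Type*} [LinearOrder α] {f : α → α}
    {s : Set α} (hf : StrictMonoOn f s) {x : α} (hx : x ∈ s) (hfx : f x ∈ s)
    (h : f (f x) = x) : f x = x := by
  rcases lt_trichotomy (f x) x with hlt | heq | hgt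
  · have := hf hfx hx hlt
    rw [h] at this
    exact absurd this hlt.asymm
  · exact heq
  · have := hf hx hfx hgt
    rw [h] at this
    exact absurd this hgt.asymm

lemma strictMonoOn_mul_mul_one_add_sq {k : ℝ} (hk : 0 < k) :
    StrictMonoOn (fun s : ℝ => k * s * (1 + s) ^ 2) (Set.Ici 0) := by
  intro a ha b hb hab
  simp only [Set.mem_Ici] at ha hb
  have : (1 + a) ^ 2 < (1 + b) ^ 2 := by nlinarith
  have : a * (1 + a) ^ 2 < b * (1 + b) ^ 2 := by nlinarith [sq_nonneg (1 + a)]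
  simpa only [mul_assoc] using mul_lt_mul_of_pos_left this hk

lemma eq_zero_of_discrim_neg {a b c d μ x y : ℝ} (hD : (a - d) ^ 2 + 4 * b * c < 0)
    (h₁ : a * x + b * y = μ * x) (h₂ : c * x + d * y = μ * y) : x = 0 ∧ y = 0 := by
  have hdet : 0 < (a - μ) * (d - μ) - b * c := by nlinarith [sq_nonneg (a + d - 2 * μ)]
  have hx : ((a - μ) * (d - μ) - b * c) * x = 0 := by
    linear_combination (d - μ) * h₁ - b * h₂
  have hy : ((a - μ) * (d - μ) - b * c) * y = 0 := by
    linear_combination (a - μ) * h₂ - c * h₁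
  exact ⟨(mul_eq_zero.mp hx).resolve_left hdet.ne', (mul_eq_zero.mp hy).resolve_left hdet.ne'⟩

def euclidNormSq (p : ℝ × ℝ) : ℝ := p.1 ^ 2 + p.2 ^ 2

lemma euclidNormSq_nonneg (p : ℝ × ℝ) : 0 ≤ euclidNormSq p := by
  unfold euclidNormSq; positivity

lemma euclidNormSq_eq_zero {p : ℝ × ℝ} : euclidNormSq p = 0 ↔ p = 0 := by
  rw [euclidNormSq, add_eq_zero_iff_of_nonneg (sq_nonneg _) (sq_nonneg _),
    pow_eq_zero_iff two_ne_zero, pow_eq_zero_iff two_ne_zero, Prod.ext_iff]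
  rfl

lemma euclidNormSq_smul (t : ℝ) (v : ℝ × ℝ) :
    euclidNormSq (t • v) = t ^ 2 * euclidNormSq v := by
  simp only [euclidNormSq, Prod.smul_fst, Prod.smul_snd, smul_eq_mul]; ring

lemma hasFDerivAt_euclidNormSq (p : ℝ × ℝ) :
    HasFDerivAt euclidNormSq ((2 * p.1) • fst ℝ ℝ ℝ + (2 * p.2) • snd ℝ ℝ ℝ) p :=
  ((hasFDerivAt_fst.pow 2).add (hasFDerivAt_snd.pow 2)).congr_fderiv (by ext <;> simp)

def rotScale (α β : ℝ) : ℝ × ℝ →L[ℝ] ℝ × ℝ :=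
  (α • fst ℝ ℝ ℝ - β • snd ℝ ℝ ℝ).prod (β • fst ℝ ℝ ℝ + α • snd ℝ ℝ ℝ)

/-- In complex notation, `spiral α β z = (α + iβ) (1 + |z|²) z`. -/
def spiral (α β : ℝ) (p : ℝ × ℝ) : ℝ × ℝ := (1 + euclidNormSq p) • rotScale α β p

section Spiral

variable (α β : ℝ)

@[simp]
lemma rotScale_apply (v : ℝ × ℝ) :
    rotScale α β v = (α * v.1 - β * v.2, β * v.1 + α * v.2) := by
  simp [rotScale]

lemma euclidNormSq_rotScale (v : ℝ × ℝ) :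
    euclidNormSq (rotScale α β v) = (α ^ 2 + β ^ 2) * euclidNormSq v := by
  simp only [euclidNormSq, rotScale_apply]; ring

lemma rotScale_rotScale (v : ℝ × ℝ) :
    rotScale α β (rotScale α β v) = rotScale (α ^ 2 - β ^ 2) (2 * α * β) v := by
  simp only [rotScale_apply, Prod.mk.injEq]; constructor <;> ring

lemma hasFDerivAt_spiral (p : ℝ × ℝ) :
    HasFDerivAt (spiral α β) ((1 + euclidNormSq p) • rotScale α β +
      ((2 * p.1) • fst ℝ ℝ ℝ + (2 * p.2) • snd ℝ ℝ ℝ).smulRight (rotScale α β p)) p :=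
  ((hasFDerivAt_euclidNormSq p).const_add 1).smul (rotScale α β).hasFDerivAt

lemma euclidNormSq_spiral (p : ℝ × ℝ) :
    euclidNormSq (spiral α β p) =
      (α ^ 2 + β ^ 2) * euclidNormSq p * (1 + euclidNormSq p) ^ 2 := by
  rw [spiral, euclidNormSq_smul, euclidNormSq_rotScale]; ring

variable {α β}

lemma fderiv_spiral_apply_ne_smul (hαβ : α ^ 2 < 3 * β ^ 2) (p : ℝ × ℝ) (μ : ℝ)
    {v : ℝ × ℝ} (hv : v ≠ 0) : fderiv ℝ (spiral α β) p v ≠ μ • v := by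
  intro h
  obtain ⟨x, y⟩ := p
  rw [(hasFDerivAt_spiral α β _).fderiv] at h
  obtain ⟨h₁, h₂⟩ := Prod.ext_iff.mp h
  simp only [add_apply, smul_apply, rotScale_apply, smulRight_apply, coe_fst', coe_snd',
    Prod.fst_add, Prod.snd_add, Prod.smul_fst, Prod.smul_snd, smul_eq_mul] at h₁ h₂
  set s := euclidNormSq (x, y) with hs
  have hD : (α * (1 + s) + 2 * x * (α * x - β * y) - (α * (1 + s) + 2 * y * (β * x + α * y))) ^ 2
      + 4 * (-β * (1 + s) + 2 * y * (α * x - β * y)) * (β * (1 + s) + 2 * x * (β * x + α * y))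
      < 0 :=
    calc _ = 4 * ((α ^ 2 - 3 * β ^ 2) * s ^ 2 - 4 * β ^ 2 * s - β ^ 2) := by
          simp only [hs, euclidNormSq]; ring
      _ < 0 := by
          have : 0 < β ^ 2 := by nlinarith [sq_nonneg α]
          nlinarith [euclidNormSq_nonneg (x, y), sq_nonneg s]
  obtain ⟨hv₁, hv₂⟩ := eq_zero_of_discrim_neg (μ := μ) (x := v.1) (y := v.2) hD
    (by linear_combination h₁) (by linear_combination h₂)
  exact hv (Prod.ext hv₁ hv₂)

lemma spiral_spiral_of_euclidNormSq_eq {p : ℝ × ℝ}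
    (h : euclidNormSq (spiral α β p) = euclidNormSq p) :
    spiral α β (spiral α β p) =
      (1 + euclidNormSq p) ^ 2 • rotScale (α ^ 2 - β ^ 2) (2 * α * β) p := by
  rw [spiral, h, spiral, map_smul, rotScale_rotScale, smul_smul, ← sq]

lemma eq_zero_of_smul_rotScale_sq_eq {t : ℝ} (hβ : β ≠ 0) (ht : t * (α ^ 2 + β ^ 2) = 1)
    {p : ℝ × ℝ} (h : t • rotScale (α ^ 2 - β ^ 2) (2 * α * β) p = p) : p = 0 := by
  obtain ⟨h₁, h₂⟩ := Prod.ext_iff.mp h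
  simp only [rotScale_apply, Prod.smul_fst, Prod.smul_snd, smul_eq_mul] at h₁ h₂
  have : β * euclidNormSq p = 0 := by
    unfold euclidNormSq
    linear_combination ((β * p.1 + α * p.2) / 2) * (p.1 * ht - h₁)
      + ((α * p.1 - β * p.2) / 2) * (h₂ - p.2 * ht) - β * (p.1 ^ 2 + p.2 ^ 2) * ht
  exact euclidNormSq_eq_zero.mp ((mul_eq_zero.mp this).resolve_left hβ)

lemma eq_zero_of_spiral_spiral_eq_self (hβ : β ≠ 0) {p : ℝ × ℝ}
    (h : spiral α β (spiral α β p) = p) : p = 0 := by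
  have hk : 0 < α ^ 2 + β ^ 2 := by positivity
  have hr : euclidNormSq (spiral α β p) = euclidNormSq p := by
    have key := (strictMonoOn_mul_mul_one_add_sq hk).apply_eq_self_of_apply_apply_eq
      (euclidNormSq_nonneg p)
      (by rw [Set.mem_Ici, ← euclidNormSq_spiral]; exact euclidNormSq_nonneg _)
      (by simp only [← euclidNormSq_spiral, h])
    simpa only [euclidNormSq_spiral] using key
  by_contra hp
  have hs : euclidNormSq p ≠ 0 := fun h0 => hp (euclidNormSq_eq_zero.mp h0)
  refine hp (eq_zero_of_smul_rotScale_sq_eq (α := α) hβ (t := (1 + euclidNormSq p) ^ 2) ?_ ?_)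
  · rw [euclidNormSq_spiral] at hr
    apply mul_left_cancel₀ hs
    linear_combination hr
  · rw [← spiral_spiral_of_euclidNormSq_eq hr, h]

end Spiral

/-- For `F(x,y) = ((αx−βy)(1+x²+y²), (βx+αy)(1+x²+y²))` with `α² < 3β²`, no derivative
`DF_p` has a real eigenvalue, and consequently `F ∘ F` has at most one fixed point. -/
theorem stmt11 (α β : ℝ) (hαβ : α ^ 2 < 3 * β ^ 2)
    (F : ℝ × ℝ → ℝ × ℝ)
    (hFdef : F = fun p : ℝ × ℝ =>
      ((α * p.1 - β * p.2) * (1 + p.1 ^ 2 + p.2 ^ 2),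
       (β * p.1 + α * p.2) * (1 + p.1 ^ 2 + p.2 ^ 2))) :
    (∀ p : ℝ × ℝ, ∀ μ : ℝ, ∀ v : ℝ × ℝ, v ≠ 0 → fderiv ℝ F p v ≠ μ • v) ∧
    (∀ p q : ℝ × ℝ, F (F p) = p → F (F q) = q → p = q) := by
  have hβ : β ≠ 0 := by rintro rfl; nlinarith [sq_nonneg α]
  have hF : F = spiral α β := by
    rw [hFdef]
    funext p
    simp only [spiral, euclidNormSq, rotScale_apply, Prod.smul_mk, smul_eq_mul]
    ext <;> ring
  subst hF
  refine ⟨fun p μ v hv => fderiv_spiral_apply_ne_smul hαβ p μ hv, fun p q hp hq => ?_⟩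
  rw [eq_zero_of_spiral_spiral_eq_self hβ hp, eq_zero_of_spiral_spiral_eq_self hβ hq]
end

section
/- There is no quadratic polynomial map F = (f, g) : ℝ² → ℝ², with f or g of degree exactly 2, such that DF_p has no real eigenvalues for every p ∈ ℝ². Equivalently: if f and g are real polynomials of degree at most 2 in (x,y) and the Jacobian matrix DF_p has non-real eigenvalues for all p, then f and g are affine (all degree-2 coefficients vanish). -/
/-!
The Jacobian of `(f, g)` at `(x, y)` has entries that are affine in `(x, y)`, and it has no real
eigenvalue exactly when its discriminant `(A - D)² + 4 B C` is negative. A non-constant affine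
function on `ℝ²` is surjective. So the off-diagonal entries `B`, `C` never vanish and must be
constant; then `(A - D)² < -4 B C` bounds `A - D`, which is therefore constant too. Constancy of
`B`, `C` and `A - D` kills all six quadratic coefficients.
-/

lemma exists_eigenvector_of_discrim_nonneg (A B C D : ℝ) (hd : 0 ≤ (A - D) ^ 2 + 4 * B * C) :
    ∃ μ : ℝ, ∃ v : ℝ × ℝ, v ≠ 0 ∧ (A * v.1 + B * v.2, C * v.1 + D * v.2) = μ • v := by
  by_cases hB : B = 0
  · exact ⟨D, (0, 1), by simp, by simp [hB]⟩
  · obtain ⟨μ, hμ⟩ : ∃ μ : ℝ, μ ^ 2 - (A + D) * μ + (A * D - B * C) = 0 :=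
      ⟨(A + D + √((A - D) ^ 2 + 4 * B * C)) / 2, by nlinarith [Real.sq_sqrt hd]⟩
    refine ⟨μ, (B, μ - A), by simp [hB], ?_⟩
    simp only [Prod.smul_mk, smul_eq_mul, Prod.mk.injEq]
    exact ⟨by ring, by linear_combination -hμ⟩

lemma hasFDerivAt_quadratic (a b c d e : ℝ) (p : ℝ × ℝ) :
    HasFDerivAt (fun q : ℝ × ℝ => a * q.1 + b * q.2 + c * q.1 ^ 2 + d * q.1 * q.2 + e * q.2 ^ 2)
      ((a + 2 * c * p.1 + d * p.2) • ContinuousLinearMap.fst ℝ ℝ ℝ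
        + (b + d * p.1 + 2 * e * p.2) • ContinuousLinearMap.snd ℝ ℝ ℝ) p := by
  have h1 : HasFDerivAt (fun q : ℝ × ℝ => q.1) (ContinuousLinearMap.fst ℝ ℝ ℝ) p := hasFDerivAt_fst
  have h2 : HasFDerivAt (fun q : ℝ × ℝ => q.2) (ContinuousLinearMap.snd ℝ ℝ ℝ) p := hasFDerivAt_snd
  refine (((((h1.const_mul a).add (h2.const_mul b)).add ((h1.pow 2).const_mul c)).add
    ((h1.const_mul d).mul h2)).add ((h2.pow 2).const_mul e)).congr_fderiv ?_
  ext <;> simp <;> ring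

lemma fderiv_quadratic_prod_apply (a11 a12 a21 a22 b11 b12 b13 b21 b22 b23 : ℝ) (p v : ℝ × ℝ) :
    fderiv ℝ (fun q : ℝ × ℝ =>
        (a11 * q.1 + a12 * q.2 + b11 * q.1 ^ 2 + b12 * q.1 * q.2 + b13 * q.2 ^ 2,
         a21 * q.1 + a22 * q.2 + b21 * q.1 ^ 2 + b22 * q.1 * q.2 + b23 * q.2 ^ 2)) p v =
      ((a11 + 2 * b11 * p.1 + b12 * p.2) * v.1 + (a12 + b12 * p.1 + 2 * b13 * p.2) * v.2,
       (a21 + 2 * b21 * p.1 + b22 * p.2) * v.1 + (a22 + b22 * p.1 + 2 * b23 * p.2) * v.2) := by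
  rw [((hasFDerivAt_quadratic a11 a12 b11 b12 b13 p).prodMk
    (hasFDerivAt_quadratic a21 a22 b21 b22 b23 p)).fderiv]
  simp

lemma eq_zero_of_forall_affine_ne {c α β : ℝ} (t : ℝ) (h : ∀ x y : ℝ, c + α * x + β * y ≠ t) :
    α = 0 ∧ β = 0 := by
  constructor
  · by_contra hα
    exact h ((t - c) / α) 0 (by field_simp; ring)
  · by_contra hβ
    exact h 0 ((t - c) / β) (by field_simp; ring)

/-- There is no genuinely quadratic polynomial map `F = (f,g) : ℝ² → ℝ²` whose Jacobian
has non-real eigenvalues everywhere: if the Jacobian of `(f,g)` has no real eigenvalue at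
any point, then all degree-2 coefficients vanish, i.e. `f` and `g` are affine. -/
theorem stmt13 (a11 a12 a21 a22 b11 b12 b13 b21 b22 b23 : ℝ)
    (f g : ℝ × ℝ → ℝ)
    (hf : f = fun p : ℝ × ℝ =>
      a11 * p.1 + a12 * p.2 + b11 * p.1 ^ 2 + b12 * p.1 * p.2 + b13 * p.2 ^ 2)
    (hg : g = fun p : ℝ × ℝ =>
      a21 * p.1 + a22 * p.2 + b21 * p.1 ^ 2 + b22 * p.1 * p.2 + b23 * p.2 ^ 2)
    (h : ∀ p : ℝ × ℝ, ∀ μ : ℝ, ∀ v : ℝ × ℝ, v ≠ 0 →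
      fderiv ℝ (fun q => (f q, g q)) p v ≠ μ • v) :
    b11 = 0 ∧ b12 = 0 ∧ b13 = 0 ∧ b21 = 0 ∧ b22 = 0 ∧ b23 = 0 := by
  subst hf hg
  have disc : ∀ x y : ℝ,
      ((a11 + 2 * b11 * x + b12 * y) - (a22 + b22 * x + 2 * b23 * y)) ^ 2
        + 4 * (a12 + b12 * x + 2 * b13 * y) * (a21 + 2 * b21 * x + b22 * y) < 0 := by
    intro x y
    by_contra! hd
    obtain ⟨μ, v, hv, heig⟩ := exists_eigenvector_of_discrim_nonneg _ _ _ _ hd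
    exact h (x, y) μ v hv (by rw [fderiv_quadratic_prod_apply]; exact heig)
  obtain ⟨hb12, hb13⟩ := eq_zero_of_forall_affine_ne (c := a12) (α := b12) (β := 2 * b13) 0
    fun x y hB => (disc x y).not_ge (by rw [hB]; nlinarith)
  obtain ⟨hb21, hb22⟩ := eq_zero_of_forall_affine_ne (c := a21) (α := 2 * b21) (β := b22) 0
    fun x y hC => (disc x y).not_ge (by rw [hC]; nlinarith)
  obtain rfl : b13 = 0 := by linarith
  obtain rfl : b21 = 0 := by linarith
  subst hb12 hb22
  -- `(A - D)² < K` with `K = -4 a12 a21`, and `(K + 1)² > K`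
  obtain ⟨hb11, hb23⟩ := eq_zero_of_forall_affine_ne (c := a11 - a22) (α := 2 * b11)
    (β := -(2 * b23)) (1 - 4 * a12 * a21) fun x y hu => by
      nlinarith [disc x y, sq_nonneg (2 * a12 * a21)]
  exact ⟨by linarith, rfl, rfl, rfl, rfl, by linarith⟩
end

section
/- If f, g : ℝ² → ℝ are quadratic polynomials as above and for all p the Jacobian of (f,g) has no real eigenvalues, then ∂f/∂y and ∂g/∂x never vanish; since these are affine functions of (x,y), they must be constant, forcing b₁₂ = b₁₃ = b₂₁ = b₂₂ = 0. -/
/-! A negative discriminant `u² + 4ab < 0` forces `ab < 0`, so both off-diagonal partials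
`∂f/∂y` and `∂g/∂x` vanish nowhere; an affine function on a field that vanishes nowhere
has all its linear coefficients equal to zero. -/

theorem mul_neg_of_sq_add_four_mul_neg {R : Type*} [CommRing R] [LinearOrder R]
    [IsStrictOrderedRing R] {u a b : R} (h : u ^ 2 + 4 * a * b < 0) : a * b < 0 := by
  nlinarith [sq_nonneg u]

section Affine

variable {K : Type*} [Field K]

theorem eq_zero_of_forall_add_mul_ne_zero {c p : K} (h : ∀ x, c + p * x ≠ 0) : p = 0 := by
  by_contra hp
  exact h (-c / p) (by field_simp; ring)

theorem eq_zero_of_forall_add_mul_add_mul_ne_zero {c p q : K}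
    (h : ∀ x y, c + p * x + q * y ≠ 0) : p = 0 ∧ q = 0 :=
  ⟨eq_zero_of_forall_add_mul_ne_zero fun x => by simpa using h x 0,
    eq_zero_of_forall_add_mul_ne_zero fun y => by simpa using h 0 y⟩

end Affine

/-- If the Jacobian of the quadratic map `(f,g)` has no real eigenvalues anywhere, i.e.
`(∂f/∂x − ∂g/∂y)² + 4(∂f/∂y)(∂g/∂x) < 0` at every point, then the affine partials
`∂f/∂y` and `∂g/∂x` never vanish, hence are constant: `b₁₂ = b₁₃ = b₂₁ = b₂₂ = 0`. -/
theorem stmt14 (a11 a12 a21 a22 b11 b12 b13 b21 b22 b23 : ℝ)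
    (h : ∀ x y : ℝ,
      ((a11 + 2 * b11 * x + b12 * y) - (a22 + b22 * x + 2 * b23 * y)) ^ 2 +
        4 * (a12 + b12 * x + 2 * b13 * y) * (a21 + 2 * b21 * x + b22 * y) < 0) :
    (∀ x y : ℝ, a12 + b12 * x + 2 * b13 * y ≠ 0) ∧
    (∀ x y : ℝ, a21 + 2 * b21 * x + b22 * y ≠ 0) ∧
    b12 = 0 ∧ b13 = 0 ∧ b21 = 0 ∧ b22 = 0 := by
  have hprod x y := (mul_neg_of_sq_add_four_mul_neg (h x y)).ne
  have hfy : ∀ x y : ℝ, a12 + b12 * x + 2 * b13 * y ≠ 0 :=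
    fun x y => left_ne_zero_of_mul (hprod x y)
  have hgx : ∀ x y : ℝ, a21 + 2 * b21 * x + b22 * y ≠ 0 :=
    fun x y => right_ne_zero_of_mul (hprod x y)
  obtain ⟨hb12, hb13⟩ := eq_zero_of_forall_add_mul_add_mul_ne_zero hfy
  obtain ⟨hb21, hb22⟩ := eq_zero_of_forall_add_mul_add_mul_ne_zero hgx
  exact ⟨hfy, hgx, hb12, by simpa using hb13, by simpa using hb21, hb22⟩
end
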